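/- Let X₁, X₂, X₃ be an ℝ-basis of su(2) and λ₁, λ₂, λ₃ real numbers such that [X₂, X₃] = λ₁ X₁, [X₃, X₁] = λ₂ X₂, and [X₁, X₂] = λ₃ X₃. Then λ₁λ₂ > 0, λ₂λ₃ > 0, and λ₃λ₁ > 0 (in particular all λᵢ are nonzero and have the same sign). -/
import Mathlib


open Matrix BigOperators

private lemma trace_cyc (A B C : Matrix (Fin 2) (Fin 2) ℂ) :
    (A * B * C).trace = (C * A * B).trace := by
  rw [mul_assoc C A B]
  exact Matrix.trace_mul_comm (A * B) C

private lemma su2_trace_sq_neg (M : Matrix (Fin 2) (Fin 2) ℂ)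
    (hskew : Mᴴ = -M) (hM : M ≠ 0) :
    ((M * M).trace).re < 0 ∧ ((M * M).trace).im = 0 := by
  set S : ℝ := ∑ i : Fin 2, ∑ j : Fin 2, Complex.normSq (M i j) with hS
  have key : (M * M).trace = -((S : ℝ) : ℂ) := by
    have h : M * M = M * (-Mᴴ) := by rw [hskew, neg_neg]
    rw [h]
    simp only [Matrix.trace, Matrix.diag, Matrix.mul_apply, Matrix.neg_apply,
      Matrix.conjTranspose_apply, mul_neg, hS]
    push_cast
    rw [← Finset.sum_neg_distrib]
    congr 1; ext i
    rw [← Finset.sum_neg_distrib]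
    congr 1; ext j
    exact congrArg Neg.neg (Complex.mul_conj _)
  have hS_nonneg : (0:ℝ) ≤ S :=
    Finset.sum_nonneg fun i _ => Finset.sum_nonneg fun j _ => Complex.normSq_nonneg _
  have hS_ne : S ≠ 0 := by
    intro h
    apply hM
    have := (Finset.sum_eq_zero_iff_of_nonneg
      (fun i _ => Finset.sum_nonneg fun j _ => Complex.normSq_nonneg _)).mp h
    ext i j
    have hi := (Finset.sum_eq_zero_iff_of_nonneg
      (fun j _ => Complex.normSq_nonneg _)).mp (this i (Finset.mem_univ i)) j (Finset.mem_univ j)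
    simpa using Complex.normSq_eq_zero.mp hi
  have hSpos : 0 < S := lt_of_le_of_ne hS_nonneg (Ne.symm hS_ne)
  constructor
  · rw [key]; simp; linarith
  · rw [key]; simp

/-- If `X₁, X₂, X₃` is an ℝ-basis of `su(2)` with `[X₂, X₃] = λ₁ X₁`,
`[X₃, X₁] = λ₂ X₂`, `[X₁, X₂] = λ₃ X₃` for reals `λ₁, λ₂, λ₃`, then
`λ₁λ₂ > 0`, `λ₂λ₃ > 0` and `λ₃λ₁ > 0`. -/
theorem normalized_frame_signs
    (X : Fin 3 → Matrix (Fin 2) (Fin 2) ℂ)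
    (hmem : ∀ i, (X i)ᴴ = -X i ∧ (X i).trace = 0)
    (hind : LinearIndependent ℝ X)
    (hspan : ∀ A : Matrix (Fin 2) (Fin 2) ℂ, Aᴴ = -A → A.trace = 0 →
      A ∈ Submodule.span ℝ (Set.range X))
    (l₁ l₂ l₃ : ℝ)
    (h₁ : X 1 * X 2 - X 2 * X 1 = l₁ • X 0)
    (h₂ : X 2 * X 0 - X 0 * X 2 = l₂ • X 1)
    (h₃ : X 0 * X 1 - X 1 * X 0 = l₃ • X 2) :
    0 < l₁ * l₂ ∧ 0 < l₂ * l₃ ∧ 0 < l₃ * l₁ := by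
  have hXne : ∀ i, X i ≠ 0 := fun i => hind.ne_zero i
  have ht : ∀ i, (((X i * X i).trace).re < 0 ∧ ((X i * X i).trace).im = 0) :=
    fun i => su2_trace_sq_neg (X i) (hmem i).1 (hXne i)
  set c : ℂ := (X 1 * X 2 * X 0).trace - (X 2 * X 1 * X 0).trace with hc
  have e1 : c = (l₁ : ℂ) * (X 0 * X 0).trace := by
    have := congrArg (fun M => (M * X 0).trace) h₁
    simpa [sub_mul, Matrix.trace_sub, smul_mul_assoc, Matrix.trace_smul, hc,
      Complex.real_smul] using this
  have e2 : c = (l₂ : ℂ) * (X 1 * X 1).trace := by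
    have := congrArg (fun M => (M * X 1).trace) h₂
    simp only [sub_mul, Matrix.trace_sub, smul_mul_assoc, Matrix.trace_smul,
      Complex.real_smul] at this
    rw [trace_cyc (X 2) (X 0) (X 1), trace_cyc (X 0) (X 2) (X 1),
      trace_cyc (X 1) (X 0) (X 2)] at this
    rw [hc]; exact this
  have e3 : c = (l₃ : ℂ) * (X 2 * X 2).trace := by
    have := congrArg (fun M => (M * X 2).trace) h₃
    simp only [sub_mul, Matrix.trace_sub, smul_mul_assoc, Matrix.trace_smul,
      Complex.real_smul] at this
    rw [trace_cyc (X 0) (X 1) (X 2), trace_cyc (X 2) (X 0) (X 1),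
      trace_cyc (X 1) (X 0) (X 2)] at this
    rw [hc]; exact this
  have r1 : c.re = l₁ * ((X 0 * X 0).trace).re := by
    rw [e1]; simp [Complex.mul_re, (ht 0).2]
  have r2 : c.re = l₂ * ((X 1 * X 1).trace).re := by
    rw [e2]; simp [Complex.mul_re, (ht 1).2]
  have r3 : c.re = l₃ * ((X 2 * X 2).trace).re := by
    rw [e3]; simp [Complex.mul_re, (ht 2).2]
  by_cases hcz : c.re = 0
  · -- all lᵢ = 0, derive contradiction with hspan
    exfalso
    have hl1 : l₁ = 0 := by
      rcases mul_eq_zero.mp (r1.symm.trans hcz) with h | h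
      · exact h
      · exact absurd h (ne_of_lt (ht 0).1)
    have hl2 : l₂ = 0 := by
      rcases mul_eq_zero.mp (r2.symm.trans hcz) with h | h
      · exact h
      · exact absurd h (ne_of_lt (ht 1).1)
    have hl3 : l₃ = 0 := by
      rcases mul_eq_zero.mp (r3.symm.trans hcz) with h | h
      · exact h
      · exact absurd h (ne_of_lt (ht 2).1)
    rw [hl1, zero_smul] at h₁; rw [hl2, zero_smul] at h₂; rw [hl3, zero_smul] at h₃
    have hcomm : ∀ i j : Fin 3, Commute (X i) (X j) := by
      have c12 : X 1 * X 2 = X 2 * X 1 := by linear_combination (norm := module) h₁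
      have c20 : X 2 * X 0 = X 0 * X 2 := by linear_combination (norm := module) h₂
      have c01 : X 0 * X 1 = X 1 * X 0 := by linear_combination (norm := module) h₃
      intro i j
      fin_cases i <;> fin_cases j <;>
        simp only [Commute, SemiconjBy, Fin.isValue] <;>
        first
          | rfl
          | exact c12 | exact c12.symm | exact c20 | exact c20.symm
          | exact c01 | exact c01.symm
    have hcommSpan : ∀ A ∈ Submodule.span ℝ (Set.range X),
        ∀ B ∈ Submodule.span ℝ (Set.range X), Commute A B := by
      intro A hA B hB
      induction hA using Submodule.span_induction with
      | mem x hx =>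
        obtain ⟨i, rfl⟩ := hx
        induction hB using Submodule.span_induction with
        | mem y hy => obtain ⟨j, rfl⟩ := hy; exact hcomm i j
        | zero => exact Commute.zero_right _
        | add y z _ _ hy hz => exact hy.add_right hz
        | smul r y _ hy => exact hy.smul_right r
      | zero => exact Commute.zero_left _
      | add y z _ _ hy hz => exact hy.add_left hz
      | smul r y _ hy => exact hy.smul_left r
    set A : Matrix (Fin 2) (Fin 2) ℂ := !![Complex.I, 0; 0, -Complex.I] with hAdef
    set B : Matrix (Fin 2) (Fin 2) ℂ := !![0, 1; -1, 0] with hBdef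
    have hAmem : A ∈ Submodule.span ℝ (Set.range X) := by
      apply hspan
      · ext i j
        fin_cases i <;> fin_cases j <;>
          simp [hAdef, Matrix.conjTranspose_apply, Complex.ext_iff]
      · simp [hAdef, Matrix.trace_fin_two]
    have hBmem : B ∈ Submodule.span ℝ (Set.range X) := by
      apply hspan
      · ext i j
        fin_cases i <;> fin_cases j <;>
          simp [hBdef, Matrix.conjTranspose_apply, Complex.ext_iff]
      · simp [hBdef, Matrix.trace_fin_two]
    have hAB := hcommSpan A hAmem B hBmem
    have h01 := congrFun (congrFun hAB 0) 1
    simp [hAdef, hBdef, Matrix.mul_apply, Fin.sum_univ_two, Complex.ext_iff,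
      Complex.I_ne_zero] at h01
    norm_num at h01
  · have t0 := (ht 0).1; have t1 := (ht 1).1; have t2 := (ht 2).1
    have hcsq : 0 < c.re ^ 2 := by positivity
    refine ⟨?_, ?_, ?_⟩
    · have key : l₁ * l₂ * (((X 0 * X 0).trace).re * ((X 1 * X 1).trace).re) = c.re ^ 2 := by
        rw [pow_two]; nth_rewrite 1 [r1]; nth_rewrite 1 [r2]; ring
      nlinarith [mul_pos_of_neg_of_neg t0 t1]
    · have key : l₂ * l₃ * (((X 1 * X 1).trace).re * ((X 2 * X 2).trace).re) = c.re ^ 2 := by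
        rw [pow_two]; nth_rewrite 1 [r2]; nth_rewrite 1 [r3]; ring
      nlinarith [mul_pos_of_neg_of_neg t1 t2]
    · have key : l₃ * l₁ * (((X 2 * X 2).trace).re * ((X 0 * X 0).trace).re) = c.re ^ 2 := by
        rw [pow_two]; nth_rewrite 1 [r3]; nth_rewrite 1 [r1]; ring
      nlinarith [mul_pos_of_neg_of_neg t2 t0]
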